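/- Let X and Y be compact metric spaces, and set X_a = cl(isol(X)), X_c = cl(X ∖ X_a), Y_a = cl(isol(Y)), Y_c = cl(Y ∖ Y_a). Then there exists a Boolean algebra isomorphism (equivalently, an order isomorphism) between Ropen(X) and Ropen(Y) if and only if isol(X) and isol(Y) have the same cardinality and (X_c = ∅ ↔ Y_c = ∅). -/
import Mathlib

open Set Topology

/-- The regular open subsets of a topological space, ordered by inclusion. -/
abbrev Ropen (Z : Type*) [TopologicalSpace Z] : Type _ :=
  {U : Set Z // U = interior (closure U)}

section Basics

variable {Z : Type*} [TopologicalSpace Z]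

lemma icic (s : Set Z) :
    interior (closure (interior (closure s))) = interior (closure s) := by
  apply subset_antisymm
  · exact interior_mono (closure_minimal interior_subset isClosed_closure)
  · exact interior_maximal subset_closure isOpen_interior

lemma ropen_isOpen (U : Ropen Z) : IsOpen U.1 := by
  rw [U.2]; exact isOpen_interior

lemma mem_closure_of_isolated {z : Z} (hz : IsOpen ({z} : Set Z)) {S : Set Z} :
    z ∈ closure S ↔ z ∈ S := by
  constructor
  · intro h
    rcases mem_closure_iff.mp h {z} hz rfl with ⟨w, hw1, hw2⟩
    rw [mem_singleton_iff] at hw1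
    subst hw1; exact hw2
  · exact fun h => subset_closure h

lemma reconstruct {I : Type*} (U : I → Set Z) (hne : ∀ i, (U i).Nonempty)
    (hdense : ∀ O : Set Z, IsOpen O → O.Nonempty → ∃ i, U i ⊆ O)
    {W : Set Z} (hW : W = interior (closure W)) :
    interior (closure (⋃ i ∈ {i | U i ⊆ W}, U i)) = W := by
  have hWo : IsOpen W := by rw [hW]; exact isOpen_interior
  apply subset_antisymm
  · have : (⋃ i ∈ {i | U i ⊆ W}, U i) ⊆ W := iUnion₂_subset fun i hi => hi
    calc interior (closure (⋃ i ∈ {i | U i ⊆ W}, U i))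
        ⊆ interior (closure W) := interior_mono (closure_mono this)
      _ = W := hW.symm
  · have hsub : W ⊆ closure (⋃ i ∈ {i | U i ⊆ W}, U i) := by
      by_contra hcon
      obtain ⟨z, hzW, hz⟩ := not_subset.mp hcon
      have hOo : IsOpen (W \ closure (⋃ i ∈ {i | U i ⊆ W}, U i)) :=
        hWo.sdiff isClosed_closure
      obtain ⟨i, hi⟩ := hdense _ hOo ⟨z, hzW, hz⟩
      have hiW : U i ⊆ W := hi.trans diff_subset
      obtain ⟨w, hw⟩ := hne i
      exact (hi hw).2 (subset_closure (mem_biUnion hiW hw))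
    exact interior_maximal hsub hWo

end Basics

section Transfer

variable {X Y : Type*} [TopologicalSpace X] [TopologicalSpace Y]

lemma transfer {I : Type*} (U : I → Set X) (V : I → Set Y)
    (hUo : ∀ i, IsOpen (U i)) (hVo : ∀ i, IsOpen (V i))
    (hUne : ∀ i, (U i).Nonempty) (hVne : ∀ i, (V i).Nonempty)
    (hUd : ∀ O : Set X, IsOpen O → O.Nonempty → ∃ i, U i ⊆ O)
    (hVd : ∀ O : Set Y, IsOpen O → O.Nonempty → ∃ i, V i ⊆ O)
    (hm : ∀ i (T : Set I),
      U i ⊆ closure (⋃ t ∈ T, U t) ↔ V i ⊆ closure (⋃ t ∈ T, V t)) :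
    Nonempty (Ropen X ≃o Ropen Y) := by
  let φ : Ropen X → Ropen Y := fun W =>
    ⟨interior (closure (⋃ i ∈ {i | U i ⊆ W.1}, V i)), (icic _).symm⟩
  let ψ : Ropen Y → Ropen X := fun W =>
    ⟨interior (closure (⋃ i ∈ {i | V i ⊆ W.1}, U i)), (icic _).symm⟩
  have keyXY : ∀ (W : Ropen X), {i | V i ⊆ (φ W).1} = {i | U i ⊆ W.1} := by
    intro W
    ext i
    simp only [mem_setOf_eq]
    constructor
    · intro hi
      have h1 : V i ⊆ closure (⋃ t ∈ {i | U i ⊆ W.1}, V t) :=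
        hi.trans interior_subset
      have h2 : U i ⊆ closure (⋃ t ∈ {i | U i ⊆ W.1}, U t) := (hm i _).mpr h1
      have h3 : U i ⊆ closure W.1 :=
        h2.trans (closure_mono (iUnion₂_subset fun t ht => ht))
      have := interior_maximal h3 (hUo i)
      rwa [← W.2] at this
    · intro hi
      exact interior_maximal
        ((subset_biUnion_of_mem (u := fun t => V t) hi).trans subset_closure)
        (hVo i)
  have keyYX : ∀ (W : Ropen Y), {i | U i ⊆ (ψ W).1} = {i | V i ⊆ W.1} := by
    intro W
    ext i
    simp only [mem_setOf_eq]
    constructor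
    · intro hi
      have h1 : U i ⊆ closure (⋃ t ∈ {i | V i ⊆ W.1}, U t) :=
        hi.trans interior_subset
      have h2 : V i ⊆ closure (⋃ t ∈ {i | V i ⊆ W.1}, V t) := (hm i _).mp h1
      have h3 : V i ⊆ closure W.1 :=
        h2.trans (closure_mono (iUnion₂_subset fun t ht => ht))
      have := interior_maximal h3 (hVo i)
      rwa [← W.2] at this
    · intro hi
      exact interior_maximal
        ((subset_biUnion_of_mem (u := fun t => U t) hi).trans subset_closure)
        (hUo i)
  have hψφ : ∀ W, ψ (φ W) = W := by
    intro W
    apply Subtype.ext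
    show interior (closure (⋃ i ∈ {i | V i ⊆ (φ W).1}, U i)) = W.1
    rw [keyXY W]
    exact reconstruct U hUne hUd W.2
  have hφψ : ∀ W, φ (ψ W) = W := by
    intro W
    apply Subtype.ext
    show interior (closure (⋃ i ∈ {i | U i ⊆ (ψ W).1}, V i)) = W.1
    rw [keyYX W]
    exact reconstruct V hVne hVd W.2
  have hφmono : ∀ W W' : Ropen X, W ≤ W' → φ W ≤ φ W' := by
    intro W W' h
    show (φ W).1 ⊆ (φ W').1
    apply interior_mono
    apply closure_mono
    apply iUnion₂_mono'
    intro i hi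
    exact ⟨i, le_trans hi (Subtype.coe_le_coe.mpr h), subset_rfl⟩
  have hψmono : ∀ W W' : Ropen Y, W ≤ W' → ψ W ≤ ψ W' := by
    intro W W' h
    show (ψ W).1 ⊆ (ψ W').1
    apply interior_mono
    apply closure_mono
    apply iUnion₂_mono'
    intro i hi
    exact ⟨i, le_trans hi (Subtype.coe_le_coe.mpr h), subset_rfl⟩
  exact ⟨Equiv.toOrderIso ⟨φ, ψ, hψφ, hφψ⟩ (fun W W' h => hφmono W W' h)
    (fun W W' h => hψmono W W' h)⟩

end Transfer

section Tree

lemma suffix_cons_of_ne {α : Type*} {r t : List α} (h : r <:+ t) (hne : r ≠ t) :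
    ∃ d, (d :: r) <:+ t := by
  obtain ⟨u, rfl⟩ := h
  rcases List.eq_nil_or_concat u with rfl | ⟨L, d, rfl⟩
  · simp at hne
  · exact ⟨d, L, by simp⟩


variable {X : Type*} [MetricSpace X] (P : Set X) (B : ℕ → Set X)

lemma child_spec (W : Set X) (n : ℕ) : ∃ C : Set X × Set X,
    (IsOpen P → (∀ x ∈ P, ¬ IsOpen ({x} : Set X)) → IsOpen (B n) →
      IsOpen W → W.Nonempty → W ⊆ P →
      (IsOpen C.1 ∧ IsOpen C.2 ∧ C.1.Nonempty ∧ C.2.Nonempty ∧ C.1 ⊆ W ∧ C.2 ⊆ W ∧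
        C.1 ∩ C.2 = ∅ ∧ W ⊆ closure (C.1 ∪ C.2) ∧ ((W ∩ B n).Nonempty → C.1 ⊆ B n))) := by
  classical
  by_cases h : IsOpen P ∧ (∀ x ∈ P, ¬ IsOpen ({x} : Set X)) ∧ IsOpen (B n) ∧
      IsOpen W ∧ W.Nonempty ∧ W ⊆ P
  · obtain ⟨hP, hcr, hBn, hW, hWne, hWP⟩ := h
    -- target set
    set G : Set X := if (W ∩ B n).Nonempty then W ∩ B n else W with hG
    have hGo : IsOpen G := by
      rw [hG]; split
      · exact hW.inter hBn
      · exact hW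
    have hGne : G.Nonempty := by
      rw [hG]; split
      · assumption
      · exact hWne
    have hGW : G ⊆ W := by
      rw [hG]; split
      · exact inter_subset_left
      · exact subset_rfl
    obtain ⟨x, hxG⟩ := hGne
    have hxW : x ∈ W := hGW hxG
    -- a second point
    have hWx : (W \ {x}).Nonempty := by
      by_contra hc
      rw [not_nonempty_iff_eq_empty, diff_eq_empty] at hc
      have : W = {x} := subset_antisymm hc (singleton_subset_iff.mpr hxW)
      exact hcr x (hWP hxW) (this ▸ hW)
    obtain ⟨y, hyW, hyx⟩ := hWx
    have hyx' : y ≠ x := hyx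
    have hdist : 0 < dist x y := dist_pos.mpr (Ne.symm hyx')
    obtain ⟨ε, hε, hball⟩ := Metric.isOpen_iff.mp hGo x hxG
    set r : ℝ := min (ε / 2) (dist x y / 2) with hr
    have hr0 : 0 < r := lt_min (by linarith) (by linarith)
    have hrε : r < ε := lt_of_le_of_lt (min_le_left _ _) (by linarith)
    have hcbG : Metric.closedBall x r ⊆ G :=
      (Metric.closedBall_subset_ball hrε).trans hball
    refine ⟨(interior (Metric.closedBall x r), W \ Metric.closedBall x r), fun _ _ _ _ _ _ => ?_⟩
    refine ⟨isOpen_interior, hW.sdiff Metric.isClosed_closedBall, ?_, ?_, ?_, ?_, ?_, ?_, ?_⟩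
    · exact ⟨x, Metric.ball_subset_interior_closedBall (Metric.mem_ball_self hr0)⟩
    · refine ⟨y, hyW, ?_⟩
      intro hy
      have : dist y x ≤ r := Metric.mem_closedBall.mp hy
      have : dist x y ≤ r := by rwa [dist_comm] at this
      have : r ≤ dist x y / 2 := min_le_right _ _
      linarith [min_le_right (ε/2) (dist x y / 2)]
    · exact (interior_subset.trans hcbG).trans hGW
    · exact diff_subset
    · apply eq_empty_iff_forall_notMem.mpr
      rintro z ⟨hz1, hz2⟩
      exact hz2.2 (interior_subset hz1)
    · -- density of union of children
      intro z hz
      rw [mem_closure_iff]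
      intro o ho hzo
      by_cases hcase : ((o ∩ W) ∩ (W \ Metric.closedBall x r)).Nonempty
      · obtain ⟨w, hw⟩ := hcase
        exact ⟨w, hw.1.1, Or.inr hw.2⟩
      · rw [not_nonempty_iff_eq_empty] at hcase
        have hsub : o ∩ W ⊆ Metric.closedBall x r := by
          intro w hw
          by_contra hwc
          exact (eq_empty_iff_forall_notMem.mp hcase w ⟨hw, hw.2, hwc⟩).elim
        have : o ∩ W ⊆ interior (Metric.closedBall x r) :=
          interior_maximal hsub (ho.inter hW)
        exact ⟨z, hzo, Or.inl (this ⟨hzo, hz⟩)⟩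
    · intro hWB
      have : G = W ∩ B n := by rw [hG, if_pos hWB]
      exact (interior_subset.trans hcbG).trans (this ▸ inter_subset_right)
  · refine ⟨(∅, ∅), fun h1 h2 h3 h4 h5 h6 => absurd ⟨h1, h2, h3, h4, h5, h6⟩ h⟩

noncomputable def childPair (W : Set X) (n : ℕ) : Set X × Set X :=
  (child_spec P B W n).choose

noncomputable def tree : List Bool → Set X
  | [] => P
  | (false :: s) => (childPair P B (tree s) s.length).1
  | (true :: s) => (childPair P B (tree s) s.length).2

variable (hP : IsOpen P) (hcr : ∀ x ∈ P, ¬ IsOpen ({x} : Set X))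
  (hB : ∀ n, IsOpen (B n)) (hPne : P.Nonempty)

include hP hcr hB hPne

lemma tree_basic : ∀ s : List Bool,
    IsOpen (tree P B s) ∧ (tree P B s).Nonempty ∧ tree P B s ⊆ P := by
  intro s
  induction s with
  | nil => exact ⟨hP, hPne, subset_rfl⟩
  | cons b s ih =>
    obtain ⟨h1, h2, h3⟩ := ih
    have hspec := (child_spec P B (tree P B s) s.length).choose_spec hP hcr (hB _) h1 h2 h3
    obtain ⟨c1, c2, c3, c4, c5, c6, _, _, _⟩ := hspec
    cases b
    · exact ⟨c1, c3, c5.trans h3⟩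
    · exact ⟨c2, c4, c6.trans h3⟩

lemma tree_spec (s : List Bool) :
    tree P B (false :: s) ⊆ tree P B s ∧ tree P B (true :: s) ⊆ tree P B s ∧
    tree P B (false :: s) ∩ tree P B (true :: s) = ∅ ∧
    tree P B s ⊆ closure (tree P B (false :: s) ∪ tree P B (true :: s)) ∧
    ((tree P B s ∩ B s.length).Nonempty → tree P B (false :: s) ⊆ B s.length) := by
  obtain ⟨h1, h2, h3⟩ := tree_basic P B hP hcr hB hPne s
  have hspec := (child_spec P B (tree P B s) s.length).choose_spec hP hcr (hB _) h1 h2 h3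
  obtain ⟨_, _, _, _, c5, c6, c7, c8, c9⟩ := hspec
  exact ⟨c5, c6, c7, c8, c9⟩

lemma tree_cons_subset (b : Bool) (s : List Bool) : tree P B (b :: s) ⊆ tree P B s := by
  obtain ⟨h1, h2, _⟩ := tree_spec P B hP hcr hB hPne s
  cases b
  · exact h1
  · exact h2

lemma tree_mono {s r : List Bool} (h : s <:+ r) : tree P B r ⊆ tree P B s := by
  obtain ⟨u, rfl⟩ := h
  induction u with
  | nil => exact subset_rfl
  | cons b u ih =>
    exact (tree_cons_subset P B hP hcr hB hPne b (u ++ s)).trans ih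

lemma tree_comp : ∀ r t : List Bool, (tree P B r ∩ tree P B t).Nonempty →
    r <:+ t ∨ t <:+ r := by
  intro r
  induction r with
  | nil => exact fun t _ => Or.inl List.nil_suffix
  | cons b r' ih =>
    intro t h
    cases t with
    | nil => exact Or.inr List.nil_suffix
    | cons c t' =>
      have h' : (tree P B r' ∩ tree P B t').Nonempty := by
        obtain ⟨z, hz1, hz2⟩ := h
        exact ⟨z, tree_cons_subset P B hP hcr hB hPne b r' hz1,
          tree_cons_subset P B hP hcr hB hPne c t' hz2⟩
      have hdisj : ∀ (s : List Bool) (b c : Bool), b ≠ c →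
          tree P B (b :: s) ∩ tree P B (c :: s) = ∅ := by
        intro s b c hbc
        obtain ⟨_, _, hd, _, _⟩ := tree_spec P B hP hcr hB hPne s
        cases b <;> cases c <;> simp at hbc ⊢
        · exact hd
        · rw [inter_comm]; exact hd
      rcases ih t' h' with hsuf | hsuf
      · by_cases heq : r' = t'
        · subst heq
          by_cases hbc : b = c
          · subst hbc; exact Or.inl (List.suffix_refl _)
          · rw [hdisj r' b c hbc] at h
            exact absurd h (by simp)
        · obtain ⟨d, hd⟩ := suffix_cons_of_ne hsuf heq
          have hsub : tree P B t' ⊆ tree P B (d :: r') :=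
            tree_mono P B hP hcr hB hPne hd
          by_cases hbd : b = d
          · subst hbd
            exact Or.inl (hd.trans (List.suffix_cons c t'))
          · have : (tree P B (b :: r') ∩ tree P B (d :: r')).Nonempty := by
              obtain ⟨z, hz1, hz2⟩ := h
              exact ⟨z, hz1, hsub (tree_cons_subset P B hP hcr hB hPne c t' hz2)⟩
            rw [hdisj r' b d hbd] at this
            exact absurd this (by simp)
      · by_cases heq : t' = r'
        · subst heq
          by_cases hbc : b = c
          · subst hbc; exact Or.inl (List.suffix_refl _)
          · rw [hdisj t' b c hbc] at h
            exact absurd h (by simp)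
        · obtain ⟨d, hd⟩ := suffix_cons_of_ne hsuf heq
          have hsub : tree P B r' ⊆ tree P B (d :: t') :=
            tree_mono P B hP hcr hB hPne hd
          by_cases hcd : c = d
          · subst hcd
            exact Or.inr (hd.trans (List.suffix_cons b r'))
          · have : (tree P B (d :: t') ∩ tree P B (c :: t')).Nonempty := by
              obtain ⟨z, hz1, hz2⟩ := h
              exact ⟨z, hsub (tree_cons_subset P B hP hcr hB hPne b r' hz1), hz2⟩
            rw [hdisj t' d c (Ne.symm hcd)] at this
            exact absurd this (by simp)

lemma tree_level : ∀ n : ℕ,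
    P ⊆ closure (⋃ s ∈ {s : List Bool | s.length = n}, tree P B s) := by
  intro n
  induction n with
  | zero =>
    have : tree P B [] ⊆ ⋃ s ∈ {s : List Bool | s.length = 0}, tree P B s :=
      subset_biUnion_of_mem (u := fun s => tree P B s) (show ([] : List Bool).length = 0 from rfl)
    exact (this.trans subset_closure :)
  | succ n ih =>
    have step : (⋃ s ∈ {s : List Bool | s.length = n}, tree P B s) ⊆
        closure (⋃ s ∈ {s : List Bool | s.length = n + 1}, tree P B s) := by
      apply iUnion₂_subset
      intro s hs
      have hs' : s.length = n := hs
      obtain ⟨_, _, _, hdense, _⟩ := tree_spec P B hP hcr hB hPne s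
      refine hdense.trans (closure_mono ?_)
      apply union_subset
      · exact subset_biUnion_of_mem (u := fun s => tree P B s)
          (show (false :: s).length = n + 1 by simp [hs'])
      · exact subset_biUnion_of_mem (u := fun s => tree P B s)
          (show (true :: s).length = n + 1 by simp [hs'])
    calc P ⊆ closure (⋃ s ∈ {s : List Bool | s.length = n}, tree P B s) := ih
      _ ⊆ closure (closure (⋃ s ∈ {s : List Bool | s.length = n + 1}, tree P B s)) :=
          closure_mono step
      _ = _ := closure_closure

lemma tree_density
    (hBbasis : ∀ O : Set X, IsOpen O → O.Nonempty → ∃ n, B n ⊆ O ∧ (B n).Nonempty) :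
    ∀ O : Set X, IsOpen O → O.Nonempty → O ⊆ P → ∃ s, tree P B s ⊆ O := by
  intro O hO hOne hOP
  obtain ⟨n, hBn, hBne⟩ := hBbasis O hO hOne
  obtain ⟨z, hz⟩ := hBne
  have hzP : z ∈ closure (⋃ s ∈ {s : List Bool | s.length = n}, tree P B s) :=
    tree_level P B hP hcr hB hPne n (hOP (hBn hz))
  obtain ⟨w, hw1, hw2⟩ := mem_closure_iff.mp hzP (B n) (hB n) hz
  rw [mem_iUnion₂] at hw2
  obtain ⟨s, hs, hws⟩ := hw2
  have hlen : s.length = n := hs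
  have : (tree P B s ∩ B s.length).Nonempty := ⟨w, hws, by rwa [hlen]⟩
  obtain ⟨_, _, _, _, htarget⟩ := tree_spec P B hP hcr hB hPne s
  exact ⟨false :: s, (htarget this).trans (by rw [hlen]; exact hBn)⟩

end Tree

section Char

variable {Z : Type*} [TopologicalSpace Z]

/-- Combinatorial characterization of `U s ⊆ closure (⋃ t ∈ T, U t)` for a "tree"
of open sets. -/
lemma tree_char (P : Set Z) (U : List Bool → Set Z)
    (hop : ∀ s, IsOpen (U s)) (hne : ∀ s, (U s).Nonempty) (hsub : ∀ s, U s ⊆ P)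
    (hmono : ∀ {s r : List Bool}, s <:+ r → U r ⊆ U s)
    (hcomp : ∀ r t : List Bool, (U r ∩ U t).Nonempty → r <:+ t ∨ t <:+ r)
    (hdens : ∀ O : Set Z, IsOpen O → O.Nonempty → O ⊆ P → ∃ s, U s ⊆ O)
    (s : List Bool) (T : Set (List Bool)) :
    U s ⊆ closure (⋃ t ∈ T, U t) ↔
      ∀ r, s <:+ r → ∃ t ∈ T, (t <:+ r ∨ r <:+ t) := by
  constructor
  · intro h r hsr
    by_contra hcon
    push_neg at hcon
    have hdisj : ∀ t ∈ T, U r ∩ U t = ∅ := by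
      intro t ht
      by_contra hne'
      rw [← Ne, ← nonempty_iff_ne_empty] at hne'
      rcases hcomp r t hne' with hc | hc
      · exact (hcon t ht).2 hc
      · exact (hcon t ht).1 hc
    have hrA : U r ∩ (⋃ t ∈ T, U t) = ∅ := by
      apply eq_empty_iff_forall_notMem.mpr
      rintro z ⟨hz1, hz2⟩
      rw [mem_iUnion₂] at hz2
      obtain ⟨t, ht, hzt⟩ := hz2
      exact eq_empty_iff_forall_notMem.mp (hdisj t ht) z ⟨hz1, hzt⟩
    obtain ⟨z, hz⟩ := hne r
    have hzcl : z ∈ closure (⋃ t ∈ T, U t) := h (hmono hsr hz)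
    obtain ⟨w, hw1, hw2⟩ := mem_closure_iff.mp hzcl (U r) (hop r) hz
    exact eq_empty_iff_forall_notMem.mp hrA w ⟨hw1, hw2⟩
  · intro h
    by_contra hcon
    obtain ⟨z, hzs, hz⟩ := not_subset.mp hcon
    set O := U s \ closure (⋃ t ∈ T, U t) with hO
    have hOo : IsOpen O := (hop s).sdiff isClosed_closure
    have hOne : O.Nonempty := ⟨z, hzs, hz⟩
    have hOP : O ⊆ P := diff_subset.trans (hsub s)
    obtain ⟨r₀, hr₀⟩ := hdens O hOo hOne hOP
    have hr₀s : (U r₀ ∩ U s).Nonempty := by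
      obtain ⟨w, hw⟩ := hne r₀
      exact ⟨w, hw, (hr₀ hw).1⟩
    -- pick r with s <:+ r and U r ⊆ O
    obtain ⟨r, hsr, hrO⟩ : ∃ r, s <:+ r ∧ U r ⊆ O := by
      rcases hcomp r₀ s hr₀s with hc | hc
      · exact ⟨s, List.suffix_refl s, (hmono hc).trans hr₀⟩
      · exact ⟨r₀, hc, hr₀⟩
    obtain ⟨t, ht, hcomp'⟩ := h r hsr
    have hrt : (U r ∩ U t).Nonempty := by
      rcases hcomp' with hc | hc
      · obtain ⟨w, hw⟩ := hne r
        exact ⟨w, hw, hmono hc hw⟩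
      · obtain ⟨w, hw⟩ := hne t
        exact ⟨w, hmono hc hw, hw⟩
    obtain ⟨w, hw1, hw2⟩ := hrt
    exact (hrO hw1).2 (subset_closure (mem_biUnion ht hw2))

/-- Characterization for a pure family of isolated singletons. -/
lemma atoms_char {A : Type*} (g : A → Z) (hg : ∀ a, IsOpen ({g a} : Set Z))
    (hginj : Function.Injective g) (i : A) (T : Set A) :
    ({g i} : Set Z) ⊆ closure (⋃ t ∈ T, ({g t} : Set Z)) ↔ i ∈ T := by
  rw [singleton_subset_iff, mem_closure_of_isolated (hg i)]
  constructor
  · intro h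
    rw [mem_iUnion₂] at h
    obtain ⟨t, ht, hgt⟩ := h
    rw [mem_singleton_iff] at hgt
    rw [hginj hgt]; exact ht
  · intro h
    exact mem_biUnion h rfl

/-- Characterization for a mixed family: isolated singletons plus a tree inside the
crowded part. -/
lemma mixed_char {A : Type*} (g : A → Z) (hg : ∀ a, IsOpen ({g a} : Set Z))
    (hginj : Function.Injective g)
    (P : Set Z) (hPcl : P ∩ closure {z : Z | IsOpen ({z} : Set Z)} = ∅)
    (U : List Bool → Set Z)
    (hop : ∀ s, IsOpen (U s)) (hne : ∀ s, (U s).Nonempty) (hsub : ∀ s, U s ⊆ P)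
    (hmono : ∀ {s r : List Bool}, s <:+ r → U r ⊆ U s)
    (hcomp : ∀ r t : List Bool, (U r ∩ U t).Nonempty → r <:+ t ∨ t <:+ r)
    (hdens : ∀ O : Set Z, IsOpen O → O.Nonempty → O ⊆ P → ∃ s, U s ⊆ O)
    (i : A ⊕ List Bool) (T : Set (A ⊕ List Bool)) :
    (Sum.elim (fun a => ({g a} : Set Z)) U i ⊆
        closure (⋃ t ∈ T, Sum.elim (fun a => ({g a} : Set Z)) U t)) ↔
      (match i with
       | Sum.inl a => Sum.inl a ∈ T
       | Sum.inr s => ∀ r, s <:+ r → ∃ t, Sum.inr t ∈ T ∧ (t <:+ r ∨ r <:+ t)) := by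
  set fam : A ⊕ List Bool → Set Z := Sum.elim (fun a => ({g a} : Set Z)) U with hfam
  have hsplit : (⋃ t ∈ T, fam t) =
      (⋃ a ∈ {a | Sum.inl a ∈ T}, ({g a} : Set Z)) ∪ (⋃ s ∈ {s | Sum.inr s ∈ T}, U s) := by
    ext z
    simp only [mem_iUnion₂, mem_union]
    constructor
    · rintro ⟨t, ht, hz⟩
      cases t with
      | inl a => exact Or.inl ⟨a, ht, hz⟩
      | inr s => exact Or.inr ⟨s, ht, hz⟩
    · rintro (⟨a, ha, hz⟩ | ⟨s, hs, hz⟩)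
      · exact ⟨Sum.inl a, ha, hz⟩
      · exact ⟨Sum.inr s, hs, hz⟩
  have hatomsub : (⋃ a ∈ {a | Sum.inl a ∈ T}, ({g a} : Set Z)) ⊆
      {z : Z | IsOpen ({z} : Set Z)} := by
    apply iUnion₂_subset
    intro a _
    rw [singleton_subset_iff]
    exact hg a
  cases i with
  | inl a =>
    show ({g a} : Set Z) ⊆ closure (⋃ t ∈ T, fam t) ↔ Sum.inl a ∈ T
    rw [singleton_subset_iff, mem_closure_of_isolated (hg a), hsplit]
    constructor
    · rintro (h | h)
      · rw [mem_iUnion₂] at h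
        obtain ⟨a', ha', hga⟩ := h
        rw [mem_singleton_iff] at hga
        rw [hginj hga]; exact ha'
      · rw [mem_iUnion₂] at h
        obtain ⟨s, _, hgs⟩ := h
        exfalso
        have h1 : g a ∈ P := hsub s hgs
        have h2 : g a ∈ closure {z : Z | IsOpen ({z} : Set Z)} :=
          subset_closure (hg a)
        exact eq_empty_iff_forall_notMem.mp hPcl (g a) ⟨h1, h2⟩
    · intro h
      exact Or.inl (mem_biUnion h rfl)
  | inr s =>
    show (U s ⊆ closure (⋃ t ∈ T, fam t)) ↔ _
    have hPA : U s ∩ closure (⋃ a ∈ {a | Sum.inl a ∈ T}, ({g a} : Set Z)) = ∅ := by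
      apply eq_empty_iff_forall_notMem.mpr
      rintro z ⟨hz1, hz2⟩
      have : z ∈ closure {z : Z | IsOpen ({z} : Set Z)} := closure_mono hatomsub hz2
      exact eq_empty_iff_forall_notMem.mp hPcl z ⟨hsub s hz1, this⟩
    have hstep : (U s ⊆ closure (⋃ t ∈ T, fam t)) ↔
        U s ⊆ closure (⋃ t ∈ {t | Sum.inr t ∈ T}, U t) := by
      rw [hsplit, closure_union]
      constructor
      · intro h z hz
        rcases h hz with hc | hc
        · exact absurd ⟨hz, hc⟩ (eq_empty_iff_forall_notMem.mp hPA z)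
        · exact hc
      · intro h z hz
        exact Or.inr (h hz)
    rw [hstep, tree_char P U hop hne hsub @hmono hcomp hdens s {t | Sum.inr t ∈ T}]
    constructor
    · intro h r hsr
      obtain ⟨t, ht, hc⟩ := h r hsr
      exact ⟨t, ht, hc⟩
    · intro h r hsr
      obtain ⟨t, ht, hc⟩ := h r hsr
      exact ⟨t, ht, hc⟩

end Char

section Atoms

variable {Z : Type*} [TopologicalSpace Z]

/-- Bottom element of `Ropen`. -/
def rbot : Ropen Z := ⟨∅, by simp⟩

lemma rbot_le (U : Ropen Z) : (rbot : Ropen Z) ≤ U := by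
  show (∅ : Set Z) ⊆ U.1
  exact empty_subset _

lemma ne_rbot_iff (U : Ropen Z) : U ≠ rbot ↔ U.1.Nonempty := by
  rw [nonempty_iff_ne_empty]
  constructor
  · intro h hc
    exact h (Subtype.ext hc)
  · intro h hc
    exact h (congrArg Subtype.val hc)

/-- Order-theoretic atoms of `Ropen`. -/
def RAtom (U : Ropen Z) : Prop :=
  U ≠ rbot ∧ ∀ V : Ropen Z, V ≤ U → V ≠ rbot → V = U

/-- Atomicity of `Ropen`. -/
def RAtomic (Z : Type*) [TopologicalSpace Z] : Prop :=
  ∀ U : Ropen Z, U ≠ rbot → ∃ V, RAtom V ∧ V ≤ U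

variable {Y : Type*} [TopologicalSpace Y]

lemma orderIso_rbot (h : Ropen Z ≃o Ropen Y) : h rbot = rbot := by
  apply le_antisymm
  · have : h rbot ≤ h (h.symm rbot) := h.monotone (rbot_le _)
    rwa [OrderIso.apply_symm_apply] at this
  · exact rbot_le _

lemma orderIso_ratom (h : Ropen Z ≃o Ropen Y) (U : Ropen Z) (hU : RAtom U) :
    RAtom (h U) := by
  constructor
  · intro hc
    apply hU.1
    have := congrArg h.symm hc
    rw [OrderIso.symm_apply_apply] at this
    rw [this, orderIso_rbot h.symm]
  · intro V hV hVne
    have h1 : h.symm V ≤ U := by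
      have := h.symm.monotone hV
      rwa [OrderIso.symm_apply_apply] at this
    have h2 : h.symm V ≠ rbot := by
      intro hc
      apply hVne
      have := congrArg h hc
      rwa [OrderIso.apply_symm_apply, orderIso_rbot h] at this
    have := hU.2 _ h1 h2
    have := congrArg h this
    rwa [OrderIso.apply_symm_apply] at this

lemma orderIso_ratom_iff (h : Ropen Z ≃o Ropen Y) (U : Ropen Z) :
    RAtom (h U) ↔ RAtom U := by
  constructor
  · intro hU
    have := orderIso_ratom h.symm (h U) hU
    rwa [OrderIso.symm_apply_apply] at this
  · exact orderIso_ratom h U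

lemma orderIso_ratomic (h : Ropen Z ≃o Ropen Y) (hA : RAtomic Z) : RAtomic Y := by
  intro U hU
  have h1 : h.symm U ≠ rbot := by
    intro hc
    apply hU
    have := congrArg h hc
    rwa [OrderIso.apply_symm_apply, orderIso_rbot h] at this
  obtain ⟨V, hV1, hV2⟩ := hA (h.symm U) h1
  refine ⟨h V, orderIso_ratom h V hV1, ?_⟩
  have := h.monotone hV2
  rwa [OrderIso.apply_symm_apply] at this

end Atoms

section MetricAtoms

variable {Z : Type*} [MetricSpace Z]

lemma singleton_ropen {z : Z} (hz : IsOpen ({z} : Set Z)) :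
    ({z} : Set Z) = interior (closure ({z} : Set Z)) := by
  rw [closure_singleton, hz.interior_eq]

lemma ratom_iff (U : Ropen Z) :
    RAtom U ↔ ∃ z : Z, IsOpen ({z} : Set Z) ∧ U.1 = {z} := by
  constructor
  · rintro ⟨hne, hatom⟩
    rw [ne_rbot_iff] at hne
    obtain ⟨a, ha⟩ := hne
    have hUo : IsOpen U.1 := ropen_isOpen U
    have hsing : U.1 = {a} := by
      apply subset_antisymm
      · intro b hb
        rw [mem_singleton_iff]
        by_contra hba
        have hr : 0 < dist b a := dist_pos.mpr hba
        set W : Set Z := U.1 ∩ Metric.ball a (dist b a / 2) with hW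
        have hWo : IsOpen W := hUo.inter Metric.isOpen_ball
        set V : Ropen Z := ⟨interior (closure W), (icic W).symm⟩ with hV
        have hVU : V ≤ U := by
          show interior (closure W) ⊆ U.1
          have : interior (closure W) ⊆ interior (closure U.1) :=
            interior_mono (closure_mono inter_subset_left)
          rwa [← U.2] at this
        have hVne : V ≠ rbot := by
          rw [ne_rbot_iff]
          refine ⟨a, ?_⟩
          have haW : a ∈ W := ⟨ha, Metric.mem_ball_self (by linarith)⟩
          exact interior_maximal subset_closure hWo haW
        have hVU' : V = U := hatom V hVU hVne
        have hbV : b ∈ V.1 := by rw [hVU']; exact hb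
        have : b ∈ closure W := interior_subset hbV
        have : b ∈ closure (Metric.ball a (dist b a / 2)) :=
          closure_mono inter_subset_right this
        have hble : dist b a ≤ dist b a / 2 :=
          Metric.mem_closedBall.mp (Metric.closure_ball_subset_closedBall this)
        linarith
      · exact singleton_subset_iff.mpr ha
    exact ⟨a, hsing ▸ hUo, hsing⟩
  · rintro ⟨z, hz, hU⟩
    constructor
    · rw [ne_rbot_iff, hU]
      exact ⟨z, rfl⟩
    · intro V hV hVne
      apply Subtype.ext
      rw [ne_rbot_iff] at hVne
      have hVsub : V.1 ⊆ U.1 := hV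
      rw [hU] at hVsub ⊢
      obtain ⟨w, hw⟩ := hVne
      have : w = z := hVsub hw
      subst this
      exact subset_antisymm hVsub (singleton_subset_iff.mpr hw)

lemma ratomic_iff_dense :
    RAtomic Z ↔ Dense {z : Z | IsOpen ({z} : Set Z)} := by
  constructor
  · intro hA
    rw [dense_iff_inter_open]
    intro O hO hOne
    by_contra hc
    rw [not_nonempty_iff_eq_empty] at hc
    set U : Ropen Z := ⟨interior (closure O), (icic O).symm⟩ with hU
    have hUne : U ≠ rbot := by
      rw [ne_rbot_iff]
      obtain ⟨z, hz⟩ := hOne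
      exact ⟨z, interior_maximal subset_closure hO hz⟩
    obtain ⟨V, hV1, hV2⟩ := hA U hUne
    rw [ratom_iff] at hV1
    obtain ⟨z, hz, hVz⟩ := hV1
    have hzU : z ∈ interior (closure O) := by
      have : z ∈ V.1 := by rw [hVz]; exact rfl
      exact hV2 this
    have : z ∈ closure O := interior_subset hzU
    rw [mem_closure_of_isolated hz] at this
    exact eq_empty_iff_forall_notMem.mp hc z ⟨this, hz⟩
  · intro hd U hUne
    rw [ne_rbot_iff] at hUne
    obtain ⟨z, hz, hziso⟩ := (dense_iff_inter_open.mp hd) U.1 (ropen_isOpen U) hUne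
    refine ⟨⟨{z}, singleton_ropen hziso⟩, ?_, ?_⟩
    · rw [ratom_iff]
      exact ⟨z, hziso, rfl⟩
    · show ({z} : Set Z) ⊆ U.1
      exact singleton_subset_iff.mpr hz

end MetricAtoms

section Main

/-- Isolated-points-to-atoms equivalence. -/
noncomputable def isolAtomEquiv (Z : Type*) [MetricSpace Z] :
    {z : Z | IsOpen ({z} : Set Z)} ≃ {U : Ropen Z // RAtom U} := by
  apply Equiv.ofBijective
    (fun a => (⟨⟨{a.1}, singleton_ropen a.2⟩, (ratom_iff _).mpr ⟨a.1, a.2, rfl⟩⟩ :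
      {U : Ropen Z // RAtom U}))
  constructor
  · intro a b hab
    have : ({a.1} : Set Z) = {b.1} := congrArg (fun U => U.1.1) hab
    exact Subtype.ext (singleton_eq_singleton_iff.mp this)
  · rintro ⟨U, hU⟩
    obtain ⟨z, hz, hUz⟩ := (ratom_iff U).mp hU
    exact ⟨⟨z, hz⟩, Subtype.ext (Subtype.ext hUz.symm)⟩

theorem stmt19' {X Y : Type*} [MetricSpace X] [CompactSpace X]
    [MetricSpace Y] [CompactSpace Y]
    (Xa Xc : Set X) (hXa : Xa = closure {x : X | IsOpen ({x} : Set X)})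
    (hXc : Xc = closure (Set.univ \ Xa))
    (Ya Yc : Set Y) (hYa : Ya = closure {y : Y | IsOpen ({y} : Set Y)})
    (hYc : Yc = closure (Set.univ \ Ya)) :
    Nonempty (Ropen X ≃o Ropen Y) ↔
      (Nonempty ({x : X | IsOpen ({x} : Set X)} ≃ {y : Y | IsOpen ({y} : Set Y)}) ∧
        (Xc = ∅ ↔ Yc = ∅)) := by
  have hXcempty : Xc = ∅ ↔ Dense {x : X | IsOpen ({x} : Set X)} := by
    rw [hXc, dense_iff_closure_eq]
    constructor
    · intro h
      have h1 : Set.univ \ Xa = ∅ := by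
        apply eq_empty_of_subset_empty
        rw [← h]
        exact subset_closure
      rw [diff_eq_empty] at h1
      rw [← hXa]
      exact subset_antisymm (subset_univ _) h1
    · intro h
      have : Set.univ \ Xa = ∅ := by
        rw [hXa, h, diff_self]
      rw [this, closure_empty]
  have hYcempty : Yc = ∅ ↔ Dense {y : Y | IsOpen ({y} : Set Y)} := by
    rw [hYc, dense_iff_closure_eq]
    constructor
    · intro h
      have h1 : Set.univ \ Ya = ∅ := by
        apply eq_empty_of_subset_empty
        rw [← h]
        exact subset_closure
      rw [diff_eq_empty] at h1
      rw [← hYa]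
      exact subset_antisymm (subset_univ _) h1
    · intro h
      have : Set.univ \ Ya = ∅ := by
        rw [hYa, h, diff_self]
      rw [this, closure_empty]
  constructor
  · rintro ⟨h⟩
    constructor
    · -- bijection of isolated points via atoms
      refine ⟨(isolAtomEquiv X).trans (Equiv.trans ?_ (isolAtomEquiv Y).symm)⟩
      exact h.toEquiv.subtypeEquiv fun U => (orderIso_ratom_iff h U).symm
    · rw [hXcempty, hYcempty, ← ratomic_iff_dense, ← ratomic_iff_dense]
      exact ⟨fun hA => orderIso_ratomic h hA, fun hA => orderIso_ratomic h.symm hA⟩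
  · rintro ⟨⟨e⟩, hiff⟩
    by_cases hXce : Xc = ∅
    · -- purely atomic case
      have hdX : Dense {x : X | IsOpen ({x} : Set X)} := hXcempty.mp hXce
      have hdY : Dense {y : Y | IsOpen ({y} : Set Y)} := hYcempty.mp (hiff.mp hXce)
      apply transfer (I := {x : X | IsOpen ({x} : Set X)})
        (fun a => ({a.1} : Set X)) (fun a => ({(e a).1} : Set Y))
        (fun a => a.2) (fun a => (e a).2)
        (fun a => ⟨a.1, rfl⟩) (fun a => ⟨(e a).1, rfl⟩)
      · intro O hO hOne
        obtain ⟨x, hxO, hxi⟩ := dense_iff_inter_open.mp hdX O hO hOne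
        exact ⟨⟨x, hxi⟩, singleton_subset_iff.mpr hxO⟩
      · intro O hO hOne
        obtain ⟨y, hyO, hyi⟩ := dense_iff_inter_open.mp hdY O hO hOne
        refine ⟨e.symm ⟨y, hyi⟩, ?_⟩
        show ({(e (e.symm ⟨y, hyi⟩)).1} : Set Y) ⊆ O
        rw [Equiv.apply_symm_apply]
        exact singleton_subset_iff.mpr hyO
      · intro i T
        refine (atoms_char Subtype.val (fun a => a.2) Subtype.val_injective i T).trans
          (atoms_char (fun a => (e a).1) (fun a => (e a).2) ?_ i T).symm
        intro a b hab
        exact e.injective (Subtype.ext hab)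
    · -- mixed case
      have hYce : Yc ≠ ∅ := fun hc => hXce (hiff.mpr hc)
      set isoX : Set X := {x : X | IsOpen ({x} : Set X)} with hisoX
      set isoY : Set Y := {y : Y | IsOpen ({y} : Set Y)} with hisoY
      set PX : Set X := (closure isoX)ᶜ with hPX
      set PY : Set Y := (closure isoY)ᶜ with hPY
      have hPXo : IsOpen PX := isClosed_closure.isOpen_compl
      have hPYo : IsOpen PY := isClosed_closure.isOpen_compl
      have hPXne : PX.Nonempty := by
        by_contra hc
        rw [not_nonempty_iff_eq_empty] at hc
        apply hXce
        rw [hXc, hXa]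
        have : Set.univ \ closure isoX = PX := by
          rw [Set.diff_eq, Set.univ_inter]
        rw [this, hc, closure_empty]
      have hPYne : PY.Nonempty := by
        by_contra hc
        rw [not_nonempty_iff_eq_empty] at hc
        apply hYce
        rw [hYc, hYa]
        have : Set.univ \ closure isoY = PY := by
          rw [Set.diff_eq, Set.univ_inter]
        rw [this, hc, closure_empty]
      have hcrX : ∀ x ∈ PX, ¬ IsOpen ({x} : Set X) := by
        intro x hx hxo
        exact hx (subset_closure hxo)
      have hcrY : ∀ y ∈ PY, ¬ IsOpen ({y} : Set Y) := by
        intro y hy hyo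
        exact hy (subset_closure hyo)
      have hPXcl : PX ∩ closure isoX = ∅ := compl_inter_self _
      have hPYcl : PY ∩ closure isoY = ∅ := compl_inter_self _
      -- countable bases
      obtain ⟨bX, hbXc, _, hbXbasis⟩ := TopologicalSpace.exists_countable_basis X
      obtain ⟨bY, hbYc, _, hbYbasis⟩ := TopologicalSpace.exists_countable_basis Y
      obtain ⟨x0, hx0⟩ := id hPXne
      obtain ⟨vX, hvXb, _, _⟩ := hbXbasis.exists_subset_of_mem_open hx0 hPXo
      obtain ⟨y0, hy0⟩ := id hPYne
      obtain ⟨vY, hvYb, _, _⟩ := hbYbasis.exists_subset_of_mem_open hy0 hPYo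
      obtain ⟨fX, hfX⟩ := hbXc.exists_eq_range ⟨vX, hvXb⟩
      obtain ⟨fY, hfY⟩ := hbYc.exists_eq_range ⟨vY, hvYb⟩
      have hBX : ∀ n, IsOpen (fX n) := fun n =>
        hbXbasis.isOpen (hfX ▸ Set.mem_range_self n)
      have hBY : ∀ n, IsOpen (fY n) := fun n =>
        hbYbasis.isOpen (hfY ▸ Set.mem_range_self n)
      have hBXbasis : ∀ O : Set X, IsOpen O → O.Nonempty →
          ∃ n, fX n ⊆ O ∧ (fX n).Nonempty := by
        intro O hO ⟨z, hz⟩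
        obtain ⟨v, hvb, hzv, hvO⟩ := hbXbasis.exists_subset_of_mem_open hz hO
        rw [hfX] at hvb
        obtain ⟨n, hn⟩ := hvb
        exact ⟨n, hn ▸ hvO, hn ▸ ⟨z, hzv⟩⟩
      have hBYbasis : ∀ O : Set Y, IsOpen O → O.Nonempty →
          ∃ n, fY n ⊆ O ∧ (fY n).Nonempty := by
        intro O hO ⟨z, hz⟩
        obtain ⟨v, hvb, hzv, hvO⟩ := hbYbasis.exists_subset_of_mem_open hz hO
        rw [hfY] at hvb
        obtain ⟨n, hn⟩ := hvb
        exact ⟨n, hn ▸ hvO, hn ▸ ⟨z, hzv⟩⟩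
      -- tree properties
      have htbX := tree_basic PX fX hPXo hcrX hBX hPXne
      have htbY := tree_basic PY fY hPYo hcrY hBY hPYne
      have htmX : ∀ {s r : List Bool}, s <:+ r → tree PX fX r ⊆ tree PX fX s :=
        fun h => tree_mono PX fX hPXo hcrX hBX hPXne h
      have htmY : ∀ {s r : List Bool}, s <:+ r → tree PY fY r ⊆ tree PY fY s :=
        fun h => tree_mono PY fY hPYo hcrY hBY hPYne h
      have htcX := tree_comp PX fX hPXo hcrX hBX hPXne
      have htcY := tree_comp PY fY hPYo hcrY hBY hPYne
      have htdX := tree_density PX fX hPXo hcrX hBX hPXne hBXbasis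
      have htdY := tree_density PY fY hPYo hcrY hBY hPYne hBYbasis
      -- the matched families
      apply transfer (I := ↥isoX ⊕ List Bool)
        (Sum.elim (fun a => ({a.1} : Set X)) (tree PX fX))
        (Sum.elim (fun a => ({(e a).1} : Set Y)) (tree PY fY))
      · rintro (a | s)
        · exact a.2
        · exact (htbX s).1
      · rintro (a | s)
        · exact (e a).2
        · exact (htbY s).1
      · rintro (a | s)
        · exact ⟨a.1, rfl⟩
        · exact (htbX s).2.1
      · rintro (a | s)
        · exact ⟨(e a).1, rfl⟩
        · exact (htbY s).2.1
      · -- density X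
        intro O hO hOne
        by_cases hcase : (O ∩ isoX).Nonempty
        · obtain ⟨x, hxO, hxi⟩ := hcase
          exact ⟨Sum.inl ⟨x, hxi⟩, singleton_subset_iff.mpr hxO⟩
        · have hOP : O ⊆ PX := by
            intro z hz
            intro hzc
            obtain ⟨w, hw1, hw2⟩ := mem_closure_iff.mp hzc O hO hz
            exact hcase ⟨w, hw1, hw2⟩
          obtain ⟨s, hs⟩ := htdX O hO hOne hOP
          exact ⟨Sum.inr s, hs⟩
      · -- density Y
        intro O hO hOne
        by_cases hcase : (O ∩ isoY).Nonempty
        · obtain ⟨y, hyO, hyi⟩ := hcase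
          refine ⟨Sum.inl (e.symm ⟨y, hyi⟩), ?_⟩
          show ({(e (e.symm ⟨y, hyi⟩)).1} : Set Y) ⊆ O
          rw [Equiv.apply_symm_apply]
          exact singleton_subset_iff.mpr hyO
        · have hOP : O ⊆ PY := by
            intro z hz
            intro hzc
            obtain ⟨w, hw1, hw2⟩ := mem_closure_iff.mp hzc O hO hz
            exact hcase ⟨w, hw1, hw2⟩
          obtain ⟨s, hs⟩ := htdY O hO hOne hOP
          exact ⟨Sum.inr s, hs⟩
      · -- matching
        intro i T
        refine (mixed_char Subtype.val (fun a => a.2) Subtype.val_injective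
            PX hPXcl (tree PX fX) (fun s => (htbX s).1) (fun s => (htbX s).2.1)
            (fun s => (htbX s).2.2) @htmX htcX htdX i T).trans
          (mixed_char (fun a => (e a).1) (fun a => (e a).2) ?_
            PY hPYcl (tree PY fY) (fun s => (htbY s).1) (fun s => (htbY s).2.1)
            (fun s => (htbY s).2.2) @htmY htcY htdY i T).symm
        intro a b hab
        exact e.injective (Subtype.ext hab)

end Main

/-- Let `X` and `Y` be compact metric spaces, `X_a = cl(isol X)`, `X_c = cl(X ∖ X_a)`,
and similarly for `Y`.  Then `Ropen(X)` and `Ropen(Y)` are isomorphic Boolean algebras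
(equivalently, order isomorphic) if and only if the sets of isolated points of `X` and
`Y` have the same cardinality and (`X_c = ∅ ↔ Y_c = ∅`). -/
theorem stmt19 {X Y : Type*} [MetricSpace X] [CompactSpace X]
    [MetricSpace Y] [CompactSpace Y]
    (Xa Xc : Set X) (hXa : Xa = closure {x : X | IsOpen ({x} : Set X)})
    (hXc : Xc = closure (Set.univ \ Xa))
    (Ya Yc : Set Y) (hYa : Ya = closure {y : Y | IsOpen ({y} : Set Y)})
    (hYc : Yc = closure (Set.univ \ Ya)) :
    Nonempty (Ropen X ≃o Ropen Y) ↔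
      (Nonempty ({x : X | IsOpen ({x} : Set X)} ≃ {y : Y | IsOpen ({y} : Set Y)}) ∧
        (Xc = ∅ ↔ Yc = ∅)) := by
  exact stmt19' Xa Xc hXa hXc Ya Yc hYa hYc
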